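/- For additive noise feedback Z_i = Y_i + V_i with V^{n-1} such that no feedback exists from Y to V (so H(Y_i | Y^{i-1}, Z^{i-1}) = H(Y_i | Y^{i-1}, V^{i-1}) and the directed information from V^{n-1} to Y^n equals the mutual information), we have I(Z^{n-1} → Y^n) = I(V^{n-1}; Y^n), where I(Z^{n-1} → Y^n) = ∑_{i=1}^n I(Z^{i-1}; Y_i|Y^{i-1}). -/
import Mathlib


open Finset

namespace NFB

variable {Ω : Type*} [Fintype Ω]

/-- Probability that the finite random variable `X` (on finite sample space `Ω`
with weights `μ`) takes the value `a`. -/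
noncomputable def pr (μ : Ω → ℝ) {α : Type*} [Fintype α] [DecidableEq α]
    (X : Ω → α) (a : α) : ℝ :=
  ∑ ω ∈ Finset.univ.filter (fun ω => X ω = a), μ ω

/-- Conditional probability `p(X = a | Y = b)`. -/
noncomputable def condpr (μ : Ω → ℝ) {α β : Type*} [Fintype α] [DecidableEq α]
    [Fintype β] [DecidableEq β] (X : Ω → α) (Y : Ω → β) (a : α) (b : β) : ℝ :=
  pr μ (fun ω => (X ω, Y ω)) (a, b) / pr μ Y b

/-- Shannon entropy (base 2) of a finite random variable. -/
noncomputable def ent (μ : Ω → ℝ) {α : Type*} [Fintype α] [DecidableEq α]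
    (X : Ω → α) : ℝ :=
  ∑ a : α, -(pr μ X a * Real.logb 2 (pr μ X a))

/-- Shannon entropy (base 2) of a distribution given directly as a weight function. -/
noncomputable def entD {γ : Type*} [Fintype γ] (p : γ → ℝ) : ℝ :=
  ∑ c : γ, -(p c * Real.logb 2 (p c))

/-- Binary entropy function (base 2). -/
noncomputable def binent (a : ℝ) : ℝ :=
  -(a * Real.logb 2 a) - ((1 - a) * Real.logb 2 (1 - a))

/-- Conditional entropy `H(X | Y)`. -/
noncomputable def condent (μ : Ω → ℝ) {α β : Type*} [Fintype α] [DecidableEq α]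
    [Fintype β] [DecidableEq β] (X : Ω → α) (Y : Ω → β) : ℝ :=
  ent μ (fun ω => (X ω, Y ω)) - ent μ Y

/-- Mutual information `I(X; Y)`. -/
noncomputable def mi (μ : Ω → ℝ) {α β : Type*} [Fintype α] [DecidableEq α]
    [Fintype β] [DecidableEq β] (X : Ω → α) (Y : Ω → β) : ℝ :=
  ent μ X + ent μ Y - ent μ (fun ω => (X ω, Y ω))

/-- Conditional mutual information `I(X; Y | Z)`. -/
noncomputable def cmi (μ : Ω → ℝ) {α β γ : Type*} [Fintype α] [DecidableEq α]
    [Fintype β] [DecidableEq β] [Fintype γ] [DecidableEq γ]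
    (X : Ω → α) (Y : Ω → β) (Z : Ω → γ) : ℝ :=
  condent μ X Z + condent μ Y Z - condent μ (fun ω => (X ω, Y ω)) Z

/-- The length-`i` prefix of a sequence `x : Fin n → α`. -/
def pfx {α : Type*} {n : ℕ} (x : Fin n → α) (i : ℕ) (h : i ≤ n) : Fin i → α :=
  fun j => x (Fin.castLE h j)

/-- Directed information `I(Xⁿ → Yⁿ) = ∑ᵢ I(Xⁱ; Yᵢ | Yⁱ⁻¹)`. -/
noncomputable def dirinfo (μ : Ω → ℝ) {α β : Type*} [Fintype α] [DecidableEq α]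
    [Fintype β] [DecidableEq β] {n : ℕ} (X : Ω → Fin n → α) (Y : Ω → Fin n → β) : ℝ :=
  ∑ i : Fin n, cmi μ (fun ω => pfx (X ω) (i.1 + 1) i.isLt)
    (fun ω => Y ω i) (fun ω => pfx (Y ω) i.1 i.isLt.le)

/-- Conditional directed information `I(Xⁿ → Yⁿ | W) = ∑ᵢ I(Xⁱ; Yᵢ | Yⁱ⁻¹, W)`. -/
noncomputable def dirinfoCond (μ : Ω → ℝ) {α β γ : Type*} [Fintype α] [DecidableEq α]
    [Fintype β] [DecidableEq β] [Fintype γ] [DecidableEq γ]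
    {n : ℕ} (X : Ω → Fin n → α) (Y : Ω → Fin n → β) (W : Ω → γ) : ℝ :=
  ∑ i : Fin n, cmi μ (fun ω => pfx (X ω) (i.1 + 1) i.isLt)
    (fun ω => Y ω i) (fun ω => (pfx (Y ω) i.1 i.isLt.le, W ω))

/-- Causal conditional directed information
`I(Xⁿ → Yⁿ ‖ Zⁿ) = ∑ᵢ I(Xⁱ; Yᵢ | Yⁱ⁻¹, Zⁱ⁻¹)`. -/
noncomputable def dirinfoCausal (μ : Ω → ℝ) {α β γ : Type*} [Fintype α] [DecidableEq α]
    [Fintype β] [DecidableEq β] [Fintype γ] [DecidableEq γ]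
    {n : ℕ} (X : Ω → Fin n → α) (Y : Ω → Fin n → β) (Z : Ω → Fin n → γ) : ℝ :=
  ∑ i : Fin n, cmi μ (fun ω => pfx (X ω) (i.1 + 1) i.isLt)
    (fun ω => Y ω i) (fun ω => (pfx (Y ω) i.1 i.isLt.le, pfx (Z ω) i.1 i.isLt.le))

/-- Directed information from feedback to outputs
`I(Zⁿ⁻¹ → Yⁿ) = ∑ᵢ I(Zⁱ⁻¹; Yᵢ | Yⁱ⁻¹)`. -/
noncomputable def fbinfo (μ : Ω → ℝ) {ζ β : Type*} [Fintype ζ] [DecidableEq ζ]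
    [Fintype β] [DecidableEq β] {n : ℕ} (Z : Ω → Fin n → ζ) (Y : Ω → Fin n → β) : ℝ :=
  ∑ i : Fin n, cmi μ (fun ω => pfx (Z ω) i.1 i.isLt.le)
    (fun ω => Y ω i) (fun ω => pfx (Y ω) i.1 i.isLt.le)

/- ===== auxiliary lemmas ===== -/

section Aux

lemma pr_comp_inj (μ : Ω → ℝ) {α α' : Type*} [Fintype α] [DecidableEq α]
    [Fintype α'] [DecidableEq α'] (X : Ω → α) {e : α → α'}
    (he : Function.Injective e) (a : α) :
    pr μ (fun ω => e (X ω)) (e a) = pr μ X a := by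
  unfold pr
  congr 1
  ext ω
  simp [he.eq_iff]

lemma pr_comp_notmem (μ : Ω → ℝ) {α α' : Type*} [Fintype α] [DecidableEq α]
    [Fintype α'] [DecidableEq α'] (X : Ω → α) (e : α → α') (b : α')
    (hb : b ∉ Finset.univ.image (fun a => e a)) :
    pr μ (fun ω => e (X ω)) b = 0 := by
  unfold pr
  rw [Finset.filter_false_of_mem, Finset.sum_empty]
  intro ω _ h
  exact hb (Finset.mem_image.mpr ⟨X ω, Finset.mem_univ _, h⟩)

lemma ent_comp_inj (μ : Ω → ℝ) {α α' : Type*} [Fintype α] [DecidableEq α]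
    [Fintype α'] [DecidableEq α'] (X : Ω → α) {e : α → α'}
    (he : Function.Injective e) :
    ent μ (fun ω => e (X ω)) = ent μ X := by
  unfold ent
  rw [← Finset.sum_subset (Finset.subset_univ (Finset.univ.image (fun a => e a)))]
  · rw [Finset.sum_image (fun a _ b _ h => he h)]
    exact Finset.sum_congr rfl fun a _ => by rw [pr_comp_inj μ X he]
  · intro b _ hb
    rw [pr_comp_notmem μ X e b hb]
    simp

lemma ent_eq_of_inj (μ : Ω → ℝ) {α α' : Type*} [Fintype α] [DecidableEq α]
    [Fintype α'] [DecidableEq α'] (X : Ω → α) (X' : Ω → α') (e : α → α')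
    (he : Function.Injective e) (h : ∀ ω, X' ω = e (X ω)) :
    ent μ X' = ent μ X := by
  have hX : X' = fun ω => e (X ω) := funext h
  rw [hX, ent_comp_inj μ X he]

lemma ent_subsingleton (μ : Ω → ℝ) (hμ1 : ∑ ω, μ ω = 1) {α : Type*} [Fintype α]
    [DecidableEq α] [Subsingleton α] (X : Ω → α) : ent μ X = 0 := by
  unfold ent
  apply Finset.sum_eq_zero
  intro a _
  have : pr μ X a = 1 := by
    unfold pr
    rw [Finset.filter_true_of_mem (fun ω _ => Subsingleton.elim _ _)]
    exact hμ1
  rw [this]; simp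

lemma ent_const (μ : Ω → ℝ) (hμ1 : ∑ ω, μ ω = 1) {α : Type*} [Fintype α]
    [DecidableEq α] (c : α) : ent μ (fun _ => c) = 0 := by
  unfold ent
  apply Finset.sum_eq_zero
  intro a _
  by_cases hac : c = a
  · subst hac
    have : pr μ (fun _ => c) c = 1 := by
      unfold pr
      rw [Finset.filter_true_of_mem (fun ω _ => rfl)]
      exact hμ1
    rw [this]; simp
  · have : pr μ (fun _ => c) a = 0 := by
      unfold pr
      rw [Finset.filter_false_of_mem (fun ω _ => hac), Finset.sum_empty]
    rw [this]; simp

lemma cmi_eq (μ : Ω → ℝ) {α β' γ : Type*} [Fintype α] [DecidableEq α]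
    [Fintype β'] [DecidableEq β'] [Fintype γ] [DecidableEq γ]
    (X : Ω → α) (Y : Ω → β') (Z : Ω → γ) :
    cmi μ X Y Z = ent μ (fun ω => (X ω, Z ω)) + ent μ (fun ω => (Y ω, Z ω))
      - ent μ (fun ω => ((X ω, Y ω), Z ω)) - ent μ Z := by
  unfold cmi condent
  ring

lemma mi_eq (μ : Ω → ℝ) {α β' : Type*} [Fintype α] [DecidableEq α]
    [Fintype β'] [DecidableEq β'] (X : Ω → α) (Y : Ω → β') :
    mi μ X Y = ent μ X + ent μ Y - ent μ (fun ω => (X ω, Y ω)) := rfl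

variable {β : Type*} [Zero β]

/-- zero-truncation of a sequence after position `i`. -/
def trunc {n : ℕ} (x : Fin n → β) (i : ℕ) : Fin n → β :=
  fun j => if j.1 < i then x j else 0

/-- zero-padded inclusion of a length-`i` prefix into length `n`. -/
def padF {n i : ℕ} (h : i ≤ n) (p : Fin i → β) : Fin n → β :=
  fun j => if hj : j.1 < i then p ⟨j.1, hj⟩ else 0

/-- extend a length-`i` prefix by one value at position `i`, zero after. -/
def ext1 {n i : ℕ} (h : i < n) (p : Fin i → β) (y : β) : Fin n → β :=
  fun j => if hj : j.1 < i then p ⟨j.1, hj⟩ else if j.1 = i then y else 0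

lemma padF_inj {n i : ℕ} (h : i ≤ n) : Function.Injective (padF (β := β) h) := by
  intro p q hpq
  funext j
  have := congrFun hpq (Fin.castLE h j)
  simpa [padF, j.isLt] using this

lemma ext1_inj {n i : ℕ} (h : i < n) :
    Function.Injective (fun py : (Fin i → β) × β => ext1 h py.1 py.2) := by
  intro ⟨p, y⟩ ⟨q, z⟩ hpq
  simp only [Prod.mk.injEq]
  constructor
  · funext j
    have := congrFun hpq (Fin.castLE h.le j)
    simpa [ext1, j.isLt] using this
  · have := congrFun hpq ⟨i, h⟩
    simpa [ext1] using this

lemma padF_pfx {n i : ℕ} (h : i ≤ n) (x : Fin n → β) :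
    padF h (pfx x i h) = trunc x i := by
  funext j
  by_cases hj : j.1 < i
  · simp [padF, trunc, pfx, hj, Fin.castLE]
  · simp [padF, trunc, hj]

lemma ext1_pfx {n i : ℕ} (h : i < n) (x : Fin n → β) :
    ext1 h (pfx x i h.le) (x ⟨i, h⟩) = trunc x (i + 1) := by
  funext j
  by_cases hj : j.1 < i
  · simp [ext1, trunc, pfx, hj, Nat.lt_succ_of_lt hj, Fin.castLE]
  · by_cases hj2 : j.1 = i
    · have : j = ⟨i, h⟩ := Fin.ext hj2
      subst this
      simp [ext1, trunc, Nat.lt_succ_self]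
    · have : ¬ j.1 < i + 1 := by omega
      simp [ext1, trunc, hj, hj2, this]

lemma trunc_zero {n : ℕ} (x : Fin n → β) : trunc x 0 = fun _ => (0 : β) := by
  funext j; simp [trunc]

lemma trunc_of_ge {n i : ℕ} (h : n ≤ i) (x : Fin n → β) : trunc x i = x := by
  funext j; simp [trunc, lt_of_lt_of_le j.isLt h]

end Aux

section Aux2

variable (μ : Ω → ℝ) {β : Type*} [Fintype β] [DecidableEq β] [AddCommGroup β]
  {n : ℕ} (Y V : Ω → Fin n → β)

/-- `H(Yᵏ)` (zero-padded). -/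
noncomputable def Aent (k : ℕ) : ℝ := ent μ (fun ω => trunc (Y ω) k)

/-- `H(Yᵏ, Vᵐ)` (zero-padded). -/
noncomputable def Bent (k m : ℕ) : ℝ :=
  ent μ (fun ω => (trunc (Y ω) k, trunc (V ω) m))

variable {Y V}

lemma pfx_sub (x y : Fin n → β) (i : ℕ) (h : i ≤ n) :
    pfx x i h - pfx y i h = pfx (x - y) i h := rfl

lemma cmi_step (Z : Ω → Fin n → β) (hZ : ∀ ω i, Z ω i = Y ω i + V ω i) (i : Fin n) :
    cmi μ (fun ω => pfx (Z ω) i.1 i.isLt.le)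
      (fun ω => Y ω i) (fun ω => pfx (Y ω) i.1 i.isLt.le)
    = Bent μ Y V i.1 i.1 + Aent μ Y (i.1 + 1) - Bent μ Y V (i.1 + 1) i.1
      - Aent μ Y i.1 := by
  have hZV : ∀ ω, Z ω - Y ω = V ω := by
    intro ω; funext j; simp [hZ ω j, Pi.sub_apply]
  rw [cmi_eq]
  have e1 : ent μ (fun ω => (pfx (Z ω) i.1 i.isLt.le, pfx (Y ω) i.1 i.isLt.le))
      = Bent μ Y V i.1 i.1 := by
    unfold Bent
    refine (ent_eq_of_inj μ _ _
      (fun zp : (Fin i.1 → β) × (Fin i.1 → β) =>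
        (padF i.isLt.le zp.2, padF i.isLt.le (zp.1 - zp.2)))
      ?_ ?_).symm
    · intro a b hab
      obtain ⟨h1, h2⟩ := Prod.mk.injEq .. ▸ hab
      have hp : a.2 = b.2 := padF_inj _ h1
      have hz : a.1 - a.2 = b.1 - b.2 := padF_inj _ h2
      have : a.1 = b.1 := by
        have := hz; rw [hp] at this
        exact sub_left_injective this
      exact Prod.ext this hp
    · intro ω
      simp only [Prod.mk.injEq]
      constructor
      · exact (padF_pfx _ _).symm
      · rw [pfx_sub, hZV ω, padF_pfx]
  have e2 : ent μ (fun ω => (Y ω i, pfx (Y ω) i.1 i.isLt.le))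
      = Aent μ Y (i.1 + 1) := by
    unfold Aent
    refine (ent_eq_of_inj μ _ _
      (fun yp : β × (Fin i.1 → β) => ext1 i.isLt yp.2 yp.1) ?_ ?_).symm
    · intro a b hab
      have := ext1_inj i.isLt (a₁ := (a.2, a.1)) (a₂ := (b.2, b.1)) hab
      obtain ⟨h1, h2⟩ := Prod.mk.injEq .. ▸ this
      exact Prod.ext h2 h1
    · intro ω
      rw [← ext1_pfx i.isLt (Y ω)]
  have e3 : ent μ (fun ω => ((pfx (Z ω) i.1 i.isLt.le, Y ω i),
        pfx (Y ω) i.1 i.isLt.le))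
      = Bent μ Y V (i.1 + 1) i.1 := by
    unfold Bent
    refine (ent_eq_of_inj μ _ _
      (fun w : ((Fin i.1 → β) × β) × (Fin i.1 → β) =>
        (ext1 i.isLt w.2 w.1.2, padF i.isLt.le (w.1.1 - w.2))) ?_ ?_).symm
    · intro a b hab
      obtain ⟨h1, h2⟩ := Prod.mk.injEq .. ▸ hab
      have hpy := ext1_inj i.isLt (a₁ := (a.2, a.1.2)) (a₂ := (b.2, b.1.2)) h1
      obtain ⟨hp, hy⟩ := Prod.mk.injEq .. ▸ hpy
      have hz : a.1.1 - a.2 = b.1.1 - b.2 := padF_inj _ h2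
      have hz' : a.1.1 = b.1.1 := by
        have := hz; rw [hp] at this
        exact sub_left_injective this
      exact Prod.ext (Prod.ext hz' hy) hp
    · intro ω
      simp only [Prod.mk.injEq]
      constructor
      · exact (ext1_pfx i.isLt (Y ω)).symm
      · rw [pfx_sub, hZV ω, padF_pfx]
  have e4 : ent μ (fun ω => pfx (Y ω) i.1 i.isLt.le) = Aent μ Y i.1 := by
    unfold Aent
    refine (ent_eq_of_inj μ _ _ (padF i.isLt.le) (padF_inj _) ?_).symm
    intro ω
    exact (padF_pfx _ _).symm
  rw [e1, e2, e3, e4]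

lemma markov_step (i : Fin n)
    (hM : cmi μ (fun ω => pfx (Y ω) (i.1 + 1) i.isLt) (fun ω => V ω i)
        (fun ω => pfx (V ω) i.1 i.isLt.le) = 0) :
    Bent μ Y V (i.1 + 1) i.1 + Bent μ Y V 0 (i.1 + 1)
      - Bent μ Y V (i.1 + 1) (i.1 + 1) - Bent μ Y V 0 i.1 = 0 := by
  rw [cmi_eq] at hM
  have e1 : ent μ (fun ω => (pfx (Y ω) (i.1 + 1) i.isLt, pfx (V ω) i.1 i.isLt.le))
      = Bent μ Y V (i.1 + 1) i.1 := by
    unfold Bent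
    refine (ent_eq_of_inj μ _ _
      (fun w : (Fin (i.1 + 1) → β) × (Fin i.1 → β) =>
        (padF i.isLt w.1, padF i.isLt.le w.2)) ?_ ?_).symm
    · intro a b hab
      obtain ⟨h1, h2⟩ := Prod.mk.injEq .. ▸ hab
      exact Prod.ext (padF_inj _ h1) (padF_inj _ h2)
    · intro ω
      simp only [Prod.mk.injEq]
      exact ⟨(padF_pfx _ _).symm, (padF_pfx _ _).symm⟩
  have e2 : ent μ (fun ω => (V ω i, pfx (V ω) i.1 i.isLt.le))
      = Bent μ Y V 0 (i.1 + 1) := by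
    unfold Bent
    refine (ent_eq_of_inj μ _ _
      (fun w : β × (Fin i.1 → β) =>
        ((fun _ => (0 : β)), ext1 i.isLt w.2 w.1)) ?_ ?_).symm
    · intro a b hab
      obtain ⟨_, h2⟩ := Prod.mk.injEq .. ▸ hab
      have := ext1_inj i.isLt (a₁ := (a.2, a.1)) (a₂ := (b.2, b.1)) h2
      obtain ⟨hp, hy⟩ := Prod.mk.injEq .. ▸ this
      exact Prod.ext hy hp
    · intro ω
      simp only [Prod.mk.injEq]
      exact ⟨trunc_zero _, (ext1_pfx i.isLt (V ω)).symm⟩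
  have e3 : ent μ (fun ω => ((pfx (Y ω) (i.1 + 1) i.isLt, V ω i),
        pfx (V ω) i.1 i.isLt.le))
      = Bent μ Y V (i.1 + 1) (i.1 + 1) := by
    unfold Bent
    refine (ent_eq_of_inj μ _ _
      (fun w : ((Fin (i.1 + 1) → β) × β) × (Fin i.1 → β) =>
        (padF i.isLt w.1.1, ext1 i.isLt w.2 w.1.2)) ?_ ?_).symm
    · intro a b hab
      obtain ⟨h1, h2⟩ := Prod.mk.injEq .. ▸ hab
      have := ext1_inj i.isLt (a₁ := (a.2, a.1.2)) (a₂ := (b.2, b.1.2)) h2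
      obtain ⟨hp, hy⟩ := Prod.mk.injEq .. ▸ this
      exact Prod.ext (Prod.ext (padF_inj _ h1) hy) hp
    · intro ω
      simp only [Prod.mk.injEq]
      exact ⟨(padF_pfx _ _).symm, (ext1_pfx i.isLt (V ω)).symm⟩
  have e4 : ent μ (fun ω => pfx (V ω) i.1 i.isLt.le) = Bent μ Y V 0 i.1 := by
    unfold Bent
    refine (ent_eq_of_inj μ _ _
      (fun w : Fin i.1 → β => ((fun _ => (0 : β)), padF i.isLt.le w)) ?_ ?_).symm
    · intro a b hab
      obtain ⟨_, h2⟩ := Prod.mk.injEq .. ▸ hab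
      exact padF_inj _ h2
    · intro ω
      simp only [Prod.mk.injEq]
      exact ⟨trunc_zero _, (padF_pfx _ _).symm⟩
  rw [e1, e2, e3, e4] at hM
  linarith

lemma mi_conv :
    mi μ (fun ω => pfx (V ω) (n - 1) (Nat.sub_le n 1)) Y
    = Bent μ Y V 0 (n - 1) + Aent μ Y n - Bent μ Y V n (n - 1) := by
  rw [mi_eq]
  have e1 : ent μ (fun ω => pfx (V ω) (n - 1) (Nat.sub_le n 1))
      = Bent μ Y V 0 (n - 1) := by
    unfold Bent
    refine (ent_eq_of_inj μ _ _
      (fun w : Fin (n - 1) → β =>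
        ((fun _ => (0 : β)), padF (Nat.sub_le n 1) w)) ?_ ?_).symm
    · intro a b hab
      obtain ⟨_, h2⟩ := Prod.mk.injEq .. ▸ hab
      exact padF_inj _ h2
    · intro ω
      simp only [Prod.mk.injEq]
      exact ⟨trunc_zero _, (padF_pfx _ _).symm⟩
  have e2 : ent μ Y = Aent μ Y n := by
    unfold Aent
    congr 1
    funext ω
    exact (trunc_of_ge le_rfl _).symm
  have e3 : ent μ (fun ω => (pfx (V ω) (n - 1) (Nat.sub_le n 1), Y ω))
      = Bent μ Y V n (n - 1) := by
    unfold Bent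
    refine (ent_eq_of_inj μ _ _
      (fun w : (Fin (n - 1) → β) × (Fin n → β) =>
        (w.2, padF (Nat.sub_le n 1) w.1)) ?_ ?_).symm
    · intro a b hab
      obtain ⟨h1, h2⟩ := Prod.mk.injEq .. ▸ hab
      exact Prod.ext (padF_inj _ h2) h1
    · intro ω
      simp only [Prod.mk.injEq]
      exact ⟨trunc_of_ge le_rfl _, (padF_pfx _ _).symm⟩
  rw [e1, e2, e3]

end Aux2

/-- for additive noise feedback `Zᵢ = Yᵢ + Vᵢ` with no feedback
from `Y` to `V` (Markov chains `Yⁱ − Vⁱ⁻¹ − Vᵢ`), we have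
`I(Zⁿ⁻¹ → Yⁿ) = I(Vⁿ⁻¹; Yⁿ)`. -/
theorem stmt14 {Ω : Type*} [Fintype Ω] (μ : Ω → ℝ)
    (hμ0 : ∀ ω, 0 ≤ μ ω) (hμ1 : ∑ ω, μ ω = 1)
    {β : Type*} [Fintype β] [DecidableEq β] [AddCommGroup β]
    {n : ℕ} (Y V Z : Ω → Fin n → β)
    (hZ : ∀ ω i, Z ω i = Y ω i + V ω i)
    (hMarkov : ∀ i : Fin n,
      cmi μ (fun ω => pfx (Y ω) (i.1 + 1) i.isLt) (fun ω => V ω i)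
        (fun ω => pfx (V ω) i.1 i.isLt.le) = 0) :
    fbinfo μ Z Y = mi μ (fun ω => pfx (V ω) (n - 1) (Nat.sub_le n 1)) Y := by
  rcases Nat.eq_zero_or_pos n with hn | hn
  · subst hn
    have h1 : fbinfo μ Z Y = 0 := by
      unfold fbinfo
      exact Finset.sum_of_isEmpty _
    haveI : IsEmpty (Fin (0 - 1)) := ⟨fun j => absurd j.isLt (by omega)⟩
    have h2 : mi μ (fun ω => pfx (V ω) (0 - 1) (Nat.sub_le 0 1)) Y = 0 := by
      rw [mi_eq, ent_subsingleton μ hμ1, ent_subsingleton μ hμ1,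
        ent_subsingleton μ hμ1]
      ring
    rw [h1, h2]
  · -- main case
    set f : ℕ → ℝ := fun k => -Bent μ Y V k k + Bent μ Y V 0 k + Aent μ Y k
      with hf
    have hsum : fbinfo μ Z Y = f n - f 0 := by
      unfold fbinfo
      have hterm : ∀ i : Fin n,
          cmi μ (fun ω => pfx (Z ω) i.1 i.isLt.le) (fun ω => Y ω i)
            (fun ω => pfx (Y ω) i.1 i.isLt.le) = f (i.1 + 1) - f i.1 := by
        intro i
        rw [cmi_step μ Z hZ i]
        have hm := markov_step μ i (hMarkov i)
        simp only [hf]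
        linarith
      rw [Finset.sum_congr rfl (fun i _ => hterm i)]
      rw [Fin.sum_univ_eq_sum_range (fun k => f (k + 1) - f k) n]
      exact Finset.sum_range_sub f n
    have hf0 : f 0 = 0 := by
      have hA0 : Aent μ Y 0 = ent μ (fun _ : Ω => (fun _ : Fin n => (0 : β))) := by
        unfold Aent
        simp only [trunc_zero]
      have hB0 : Bent μ Y V 0 0 = ent μ (fun _ : Ω =>
          ((fun _ : Fin n => (0 : β)), (fun _ : Fin n => (0 : β)))) := by
        unfold Bent
        simp only [trunc_zero]
      simp only [hf, hA0, hB0]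
      rw [ent_const μ hμ1, ent_const μ hμ1]
      ring
    rw [hsum, hf0, mi_conv μ]
    -- use Markov at i = n-1 to relate Bent n (n-1) to Bent n n
    have hi : n - 1 < n := by omega
    have hm := markov_step μ (⟨n - 1, hi⟩ : Fin n) (hMarkov ⟨n - 1, hi⟩)
    have hn1 : n - 1 + 1 = n := by omega
    rw [hn1] at hm
    simp only [hf]
    linarith

end NFB
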